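/- For every b ∈ C with q(b) ≠ 0 there exists a unique vertex lattice Λ_b of type 0 such that π^{−ord_{π₀}(q(b))}·b ∈ Λ_b \ πΛ_b. -/

import Mathlib

noncomputable section

attribute [local instance] Classical.propDecidable

variable {F : Type} [Field F]

/-- Membership in the valuation ring `O_F = {x : F | x = 0 ∨ v x ≥ 0}`. -/
def inO (v : F → ℤ) (x : F) : Prop := x = 0 ∨ 0 ≤ v x

/-- The Hermitian form `h(x, y) = x₁ · σ(y₂) + x₂ · σ(y₁)` on `C = F²`. -/
def herm (σ : F →+* F) (x y : F × F) : F := x.1 * σ y.2 + x.2 * σ y.1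

/-- The `O_F`-span of two vectors of `C = F²`. -/
def spanL (v : F → ℤ) (u w : F × F) : Set (F × F) :=
  {x | ∃ a b : F, inO v a ∧ inO v b ∧ x = a • u + b • w}

/-- An `O_F`-lattice in `C`: a free rank-2 `O_F`-submodule spanning `C` over `F`. -/
def IsLattice (v : F → ℤ) (Λ : Set (F × F)) : Prop :=
  ∃ u w : F × F, LinearIndependent F ![u, w] ∧ Λ = spanL v u w

/-- The dual lattice `Λ^♯ = {x ∈ C | h(x, Λ) ⊆ O_F}`. -/
def dualL (σ : F →+* F) (v : F → ℤ) (Λ : Set (F × F)) : Set (F × F) :=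
  {x | ∀ y ∈ Λ, inO v (herm σ x y)}

/-- A vertex lattice of type 0: a self-dual lattice. -/
def IsVertex0 (σ : F →+* F) (v : F → ℤ) (Λ : Set (F × F)) : Prop :=
  IsLattice v Λ ∧ dualL σ v Λ = Λ

/-- A vertex lattice of type 2: a lattice with `Λ^♯ = π Λ`
(equivalently `πΛ ⊆ Λ^♯ ⊆ Λ` with `Λ/Λ^♯` two-dimensional over the residue field). -/
def IsVertex2 (σ : F →+* F) (π : F) (v : F → ℤ) (Λ : Set (F × F)) : Prop :=
  IsLattice v Λ ∧ dualL σ v Λ = (fun x => π • x) '' Λ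

/-- A vertex lattice (of type 0 or type 2). -/
def IsVertex (σ : F →+* F) (π : F) (v : F → ℤ) (Λ : Set (F × F)) : Prop :=
  IsVertex0 σ v Λ ∨ IsVertex2 σ π v Λ

/-- `nIs π b Λ n` says that `n = n(b, Λ)` is the largest integer `m` with `π⁻ᵐ b ∈ Λ`. -/
def nIs (π : F) (b : F × F) (Λ : Set (F × F)) (n : ℤ) : Prop :=
  IsGreatest {m : ℤ | (π ^ (-m)) • b ∈ Λ} n

/-- Adjacency of type-2 vertex lattices: distinct, with intersection a type-0 vertex lattice. -/
def AdjV (σ : F →+* F) (π : F) (v : F → ℤ) (Λ Λ' : Set (F × F)) : Prop :=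
  IsVertex2 σ π v Λ ∧ IsVertex2 σ π v Λ' ∧ Λ ≠ Λ' ∧ IsVertex0 σ v (Λ ∩ Λ')

/-- There is a walk of length `k` between `Λ` and `Λ'` in the Bruhat–Tits tree. -/
def WalkN (σ : F →+* F) (π : F) (v : F → ℤ) (k : ℕ) (Λ Λ' : Set (F × F)) : Prop :=
  ∃ f : ℕ → Set (F × F), f 0 = Λ ∧ f k = Λ' ∧ ∀ i < k, AdjV σ π v (f i) (f (i + 1))

/-- `dGIs σ π v Λ Λ' k` : the graph distance `d_G(Λ, Λ')` equals `k`. -/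
def dGIs (σ : F →+* F) (π : F) (v : F → ℤ) (Λ Λ' : Set (F × F)) (k : ℕ) : Prop :=
  IsLeast {j : ℕ | WalkN σ π v j Λ Λ'} k

/-- `P` is a type-2 "hull" of the vertex lattice `Λ`: `P = Λ` when `Λ` has type 2,
and `P` is a type-2 vertex lattice containing `Λ` when `Λ` has type 0. -/
def HullOf (σ : F →+* F) (π : F) (v : F → ℤ) (Λ P : Set (F × F)) : Prop :=
  (IsVertex2 σ π v Λ ∧ P = Λ) ∨ (IsVertex0 σ v Λ ∧ IsVertex2 σ π v P ∧ Λ ⊆ P)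

/-- `DTwice σ π v Λ Λ' m` : twice the tree distance `D(Λ, Λ')` equals `m`
(type-0 vertex lattices are midpoints of edges, contributing `1/2` each). -/
def DTwice (σ : F →+* F) (π : F) (v : F → ℤ) (Λ Λ' : Set (F × F)) (m : ℕ) : Prop :=
  (Λ = Λ' ∧ m = 0) ∨
  (Λ ≠ Λ' ∧ ∃ k : ℕ,
    IsLeast {j : ℕ | ∃ P Q, HullOf σ π v Λ P ∧ HullOf σ π v Λ' Q ∧ WalkN σ π v j P Q} k ∧
    (m : ℤ) = 2 * k + (if IsVertex0 σ v Λ then 1 else 0) +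
      (if IsVertex0 σ v Λ' then 1 else 0))

/-- `g ∈ GL₂(O_F)`. -/
def InGL2O (v : F → ℤ) (g : Matrix (Fin 2) (Fin 2) F) : Prop :=
  (∀ i j, inO v (g i j)) ∧
    ∃ g' : Matrix (Fin 2) (Fin 2) F, (∀ i j, inO v (g' i j)) ∧ g * g' = 1 ∧ g' * g = 1

/-- Equivalence of Hermitian matrices: `T ≈ T'` iff `gᵗ T ḡ = T'` for some `g ∈ GL₂(O_F)`. -/
def HermEquiv (σ : F →+* F) (v : F → ℤ) (T T' : Matrix (Fin 2) (Fin 2) F) : Prop :=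
  ∃ g, InGL2O v g ∧ g.transpose * T * g.map (fun x => σ x) = T'

/-- `u` is a unit of `O_{F₀}`. -/
def IsUnitO₀ (σ : F →+* F) (v : F → ℤ) (u : F) : Prop :=
  σ u = u ∧ u ≠ 0 ∧ v u = 0

/-- `x` is a norm from `F^×`. -/
def IsNorm (σ : F →+* F) (x : F) : Prop := ∃ y : F, y ≠ 0 ∧ x = y * σ y

/-!
Rescaling `b` by `π^{-α}` makes `u = h(b, b)` a unit. The vector `b^⊥ = (σ b₁, -σ b₂)` is
orthogonal to `b` with `h(b^⊥, b^⊥) = -u`, so `Λ_b = O b + O b^⊥` is self-dual, and `b` is not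
in `π Λ` for any self-dual `Λ ∋ b`, since otherwise `u ∈ π O`. Conversely, let `Λ ∋ b` be
self-dual and write `x ∈ Λ` as `a b + c b^⊥`. Then `a = h(x, b) / u` is integral, so `c b^⊥ ∈ Λ`
and `h(c b^⊥, c b^⊥) = -c c̄ u` is integral, hence so is `c`. Thus `Λ ⊆ Λ_b`, and dualizing gives
`Λ_b ⊆ Λ`.
-/

-- The value `v 0` is junk: all conditions on `v` concern nonzero elements.
structure IsIntValuation (v : F → ℤ) : Prop where
  map_mul : ∀ x y : F, x ≠ 0 → y ≠ 0 → v (x * y) = v x + v y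
  min_le_map_add : ∀ x y : F, x ≠ 0 → y ≠ 0 → x + y ≠ 0 → min (v x) (v y) ≤ v (x + y)

namespace IsIntValuation

variable {v : F → ℤ}

theorem map_one (hv : IsIntValuation v) : v 1 = 0 := by
  have h := hv.map_mul 1 1 one_ne_zero one_ne_zero
  rw [mul_one] at h
  omega

theorem map_inv (hv : IsIntValuation v) {x : F} (hx : x ≠ 0) : v x⁻¹ = -v x := by
  have h := hv.map_mul x x⁻¹ hx (inv_ne_zero hx)
  rw [mul_inv_cancel₀ hx, hv.map_one] at h
  omega

theorem map_neg (hv : IsIntValuation v) {x : F} (hx : x ≠ 0) : v (-x) = v x := by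
  have hm1 : (-1 : F) ≠ 0 := neg_ne_zero.2 one_ne_zero
  have h1 := hv.map_mul (-1) (-1) hm1 hm1
  have h := hv.map_mul (-1) x hm1 hx
  rw [neg_mul_neg, one_mul, hv.map_one] at h1
  rw [neg_one_mul] at h
  omega

theorem map_pow (hv : IsIntValuation v) {x : F} (hx : x ≠ 0) (n : ℕ) : v (x ^ n) = n * v x := by
  induction n with
  | zero => simp [hv.map_one]
  | succ n ih =>
    rw [pow_succ, hv.map_mul _ _ (pow_ne_zero n hx) hx, ih]
    push_cast
    ring

theorem map_zpow (hv : IsIntValuation v) {x : F} (hx : x ≠ 0) (n : ℤ) :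
    v (x ^ n) = n * v x := by
  obtain ⟨k, rfl | rfl⟩ := Int.eq_nat_or_neg n
  · rw [zpow_natCast, hv.map_pow hx]
  · rw [zpow_neg, zpow_natCast, hv.map_inv (pow_ne_zero k hx), hv.map_pow hx]
    ring

theorem inO_one (hv : IsIntValuation v) : inO v 1 := Or.inr hv.map_one.ge

theorem inO_mul (hv : IsIntValuation v) {x y : F} (hx : inO v x) (hy : inO v y) :
    inO v (x * y) := by
  rcases hx with rfl | hx
  · exact Or.inl (zero_mul y)
  rcases hy with rfl | hy
  · exact Or.inl (mul_zero x)
  by_cases hxy : x * y = 0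
  · exact Or.inl hxy
  obtain ⟨hx0, hy0⟩ := mul_ne_zero_iff.1 hxy
  exact Or.inr (by rw [hv.map_mul x y hx0 hy0]; omega)

theorem inO_neg_iff (hv : IsIntValuation v) {x : F} : inO v (-x) ↔ inO v x := by
  by_cases hx : x = 0
  · simp [hx, inO]
  simp only [inO, neg_eq_zero, hx, false_or, hv.map_neg hx]

theorem inO_add (hv : IsIntValuation v) {x y : F} (hx : inO v x) (hy : inO v y) :
    inO v (x + y) := by
  by_cases hx0 : x = 0
  · simpa [hx0] using hy
  by_cases hy0 : y = 0
  · simpa [hy0] using hx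
  by_cases hxy : x + y = 0
  · exact Or.inl hxy
  have := hv.min_le_map_add x y hx0 hy0 hxy
  have := hx.resolve_left hx0
  have := hy.resolve_left hy0
  exact Or.inr (by omega)

theorem inO_sub (hv : IsIntValuation v) {x y : F} (hx : inO v x) (hy : inO v y) :
    inO v (x - y) := by
  rw [sub_eq_add_neg]
  exact hv.inO_add hx (hv.inO_neg_iff.2 hy)

theorem inO_div_of_map_eq_zero (hv : IsIntValuation v) {x u : F} (hx : inO v x) (hu0 : u ≠ 0)
    (hu : v u = 0) : inO v (x / u) := by
  rw [div_eq_mul_inv]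
  exact hv.inO_mul hx (Or.inr (by rw [hv.map_inv hu0, hu]; rfl))

theorem inO_mul_iff_of_map_eq_zero (hv : IsIntValuation v) {x u : F} (hu0 : u ≠ 0)
    (hu : v u = 0) : inO v (x * u) ↔ inO v x := by
  by_cases hx : x = 0
  · simp [hx, inO]
  simp only [inO, mul_eq_zero, hx, hu0, or_self, false_or, hv.map_mul x u hx hu0, hu, add_zero]

theorem inO_of_inO_mul_map (hv : IsIntValuation v) {σ : F →+* F} (hvσ : ∀ x, v (σ x) = v x)
    {x : F} (h : inO v (x * σ x)) : inO v x := by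
  by_cases hx : x = 0
  · exact Or.inl hx
  have h' := h.resolve_left (mul_ne_zero hx ((map_ne_zero σ).2 hx))
  rw [hv.map_mul x _ hx ((map_ne_zero σ).2 hx), hvσ] at h'
  exact Or.inr (by omega)

end IsIntValuation

theorem inO_map {v : F → ℤ} {σ : F →+* F} (hvσ : ∀ x, v (σ x) = v x) {x : F} (hx : inO v x) :
    inO v (σ x) := by
  rcases hx with rfl | hx
  · exact Or.inl (map_zero σ)
  · exact Or.inr (by rwa [hvσ])

section Hermitian

variable {σ : F →+* F}

def hermPerp (σ : F →+* F) (b : F × F) : F × F := (σ b.1, -σ b.2)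

theorem herm_smul_left (c : F) (x y : F × F) : herm σ (c • x) y = c * herm σ x y := by
  simp only [herm, Prod.smul_fst, Prod.smul_snd, smul_eq_mul]
  ring

theorem herm_smul_smul (c : F) (x : F × F) :
    herm σ (c • x) (c • x) = c * σ c * herm σ x x := by
  simp only [herm, Prod.smul_fst, Prod.smul_snd, smul_eq_mul, map_mul]
  ring

theorem herm_add_smul_hermPerp (hσ : Function.Involutive σ) (b : F × F) (a c a' c' : F) :
    herm σ (a • b + c • hermPerp σ b) (a' • b + c' • hermPerp σ b) =
      (a * σ a' - c * σ c') * herm σ b b := by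
  simp only [herm, hermPerp, Prod.fst_add, Prod.snd_add, Prod.smul_fst, Prod.smul_snd,
    smul_eq_mul, map_add, map_mul, map_neg, hσ _]
  ring

theorem herm_hermPerp_self (hσ : Function.Involutive σ) (b : F × F) :
    herm σ (hermPerp σ b) (hermPerp σ b) = -herm σ b b := by
  simpa using herm_add_smul_hermPerp hσ b 0 1 0 1

theorem eq_smul_add_smul_hermPerp (hσ : Function.Involutive σ) {b : F × F}
    (hb : herm σ b b ≠ 0) (x : F × F) :
    x = (herm σ x b / herm σ b b) • b +
      (-herm σ x (hermPerp σ b) / herm σ b b) • hermPerp σ b := by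
  have hb' : σ b.2 * b.1 + σ b.1 * b.2 ≠ 0 := by
    rw [mul_comm (σ b.2), mul_comm (σ b.1)]
    exact hb
  ext <;>
  · simp only [herm, hermPerp, Prod.fst_add, Prod.snd_add, Prod.smul_fst, Prod.smul_snd,
      smul_eq_mul, map_neg, hσ _]
    field_simp
    ring

theorem linearIndependent_hermPerp (hσ : Function.Involutive σ) {b : F × F}
    (hb : herm σ b b ≠ 0) : LinearIndependent F ![b, hermPerp σ b] := by
  rw [LinearIndependent.pair_iff]
  intro a c hac
  have h1 := herm_add_smul_hermPerp hσ b a c 1 0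
  have h2 := herm_add_smul_hermPerp hσ b a c 0 1
  simp only [hac, herm, Prod.fst_zero, Prod.snd_zero, zero_mul, add_zero, one_smul, zero_smul,
    map_one, map_zero, mul_one, mul_zero, sub_zero, zero_sub] at h1 h2
  exact ⟨(mul_eq_zero.1 h1.symm).resolve_right hb,
    neg_eq_zero.1 ((mul_eq_zero.1 h2.symm).resolve_right hb)⟩

end Hermitian

section Lattice

variable {σ : F →+* F} {v : F → ℤ}

theorem mem_spanL_left (hv : IsIntValuation v) (u w : F × F) : u ∈ spanL v u w :=
  ⟨1, 0, hv.inO_one, Or.inl rfl, by simp⟩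

theorem mem_spanL_right (hv : IsIntValuation v) (u w : F × F) : w ∈ spanL v u w :=
  ⟨0, 1, Or.inl rfl, hv.inO_one, by simp⟩

theorem IsLattice.sub_smul_mem (hv : IsIntValuation v) {Λ : Set (F × F)} (hΛ : IsLattice v Λ)
    {x y : F × F} {a : F} (hx : x ∈ Λ) (hy : y ∈ Λ) (ha : inO v a) : x - a • y ∈ Λ := by
  obtain ⟨u, w, -, rfl⟩ := hΛ
  obtain ⟨p, q, hp, hq, rfl⟩ := hx
  obtain ⟨r, s, hr, hs, rfl⟩ := hy
  exact ⟨p - a * r, q - a * s, hv.inO_sub hp (hv.inO_mul ha hr),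
    hv.inO_sub hq (hv.inO_mul ha hs), by module⟩

theorem dualL_anti {Λ Λ' : Set (F × F)} (h : Λ ⊆ Λ') : dualL σ v Λ' ⊆ dualL σ v Λ :=
  fun _ hx y hy => hx y (h hy)

theorem mem_spanL_hermPerp_iff (hv : IsIntValuation v) (hσ : Function.Involutive σ)
    {b : F × F} (hb0 : herm σ b b ≠ 0) (hb : v (herm σ b b) = 0) {x : F × F} :
    x ∈ spanL v b (hermPerp σ b) ↔
      inO v (herm σ x b) ∧ inO v (herm σ x (hermPerp σ b)) := by
  constructor
  · rintro ⟨a, c, ha, hc, rfl⟩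
    have h1 := herm_add_smul_hermPerp hσ b a c 1 0
    have h2 := herm_add_smul_hermPerp hσ b a c 0 1
    simp only [one_smul, zero_smul, add_zero, zero_add, map_one, map_zero, mul_one, mul_zero,
      sub_zero, zero_sub, neg_mul] at h1 h2
    rw [h1, h2, hv.inO_neg_iff, hv.inO_mul_iff_of_map_eq_zero hb0 hb,
      hv.inO_mul_iff_of_map_eq_zero hb0 hb]
    exact ⟨ha, hc⟩
  · rintro ⟨h1, h2⟩
    exact ⟨_, _, hv.inO_div_of_map_eq_zero h1 hb0 hb,
      hv.inO_div_of_map_eq_zero (hv.inO_neg_iff.2 h2) hb0 hb, eq_smul_add_smul_hermPerp hσ hb0 x⟩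

theorem isVertex0_spanL_hermPerp (hv : IsIntValuation v) (hσ : Function.Involutive σ)
    (hvσ : ∀ x, v (σ x) = v x)
    {b : F × F} (hb0 : herm σ b b ≠ 0) (hb : v (herm σ b b) = 0) :
    IsVertex0 σ v (spanL v b (hermPerp σ b)) := by
  refine ⟨⟨b, hermPerp σ b, linearIndependent_hermPerp hσ hb0, rfl⟩, ?_⟩
  apply Set.Subset.antisymm
  · intro x hx
    exact (mem_spanL_hermPerp_iff hv hσ hb0 hb).2
      ⟨hx b (mem_spanL_left hv _ _), hx _ (mem_spanL_right hv _ _)⟩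
  · rintro _ ⟨a, c, ha, hc, rfl⟩ _ ⟨a', c', ha', hc', rfl⟩
    rw [herm_add_smul_hermPerp hσ, hv.inO_mul_iff_of_map_eq_zero hb0 hb]
    exact hv.inO_sub (hv.inO_mul ha (inO_map hvσ ha')) (hv.inO_mul hc (inO_map hvσ hc'))

theorem not_mem_smul_of_subset_dualL (hv : IsIntValuation v) {Λ : Set (F × F)}
    (hΛ : Λ ⊆ dualL σ v Λ) {π : F} (hvπ : v π = 1) {b : F × F} (hb0 : herm σ b b ≠ 0)
    (hb : v (herm σ b b) = 0) (hbΛ : b ∈ Λ) : b ∉ (fun x => π • x) '' Λ := by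
  rintro ⟨x, hx, hxb⟩
  dsimp only at hxb
  subst hxb
  have hπx : herm σ (π • x) (π • x) = π * herm σ x (π • x) := herm_smul_left π x _
  have hπ0 : π ≠ 0 := fun h => hb0 (by rw [hπx, h, zero_mul])
  have hx0 : herm σ x (π • x) ≠ 0 := fun h => hb0 (by rw [hπx, h, mul_zero])
  have := (hΛ hx _ hbΛ).resolve_left hx0
  rw [hπx, hv.map_mul _ _ hπ0 hx0, hvπ] at hb
  omega

theorem subset_spanL_hermPerp_of_isVertex0 (hv : IsIntValuation v) (hσ : Function.Involutive σ)
    (hvσ : ∀ x, v (σ x) = v x) {b : F × F} (hb0 : herm σ b b ≠ 0) (hb : v (herm σ b b) = 0)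
    {Λ : Set (F × F)} (hΛ : IsVertex0 σ v Λ) (hbΛ : b ∈ Λ) :
    Λ ⊆ spanL v b (hermPerp σ b) := by
  have hintegral : ∀ y ∈ Λ, ∀ z ∈ Λ, inO v (herm σ y z) := fun y hy =>
    (hΛ.2.symm ▸ hy : y ∈ dualL σ v Λ)
  intro x hx
  set a := herm σ x b / herm σ b b
  set c := -herm σ x (hermPerp σ b) / herm σ b b
  have hx_eq : x = a • b + c • hermPerp σ b := eq_smul_add_smul_hermPerp hσ hb0 x
  have ha : inO v a := hv.inO_div_of_map_eq_zero (hintegral x hx b hbΛ) hb0 hb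
  have hcΛ : c • hermPerp σ b ∈ Λ := by
    have h := hΛ.1.sub_smul_mem hv hx hbΛ ha
    rwa [hx_eq, add_sub_cancel_left] at h
  have hc : inO v c := by
    have h := hintegral _ hcΛ _ hcΛ
    rw [herm_smul_smul, herm_hermPerp_self hσ, mul_neg, hv.inO_neg_iff,
      hv.inO_mul_iff_of_map_eq_zero hb0 hb] at h
    exact hv.inO_of_inO_mul_map hvσ h
  exact ⟨a, c, ha, hc, hx_eq⟩

theorem eq_spanL_hermPerp_of_isVertex0 (hv : IsIntValuation v) (hσ : Function.Involutive σ)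
    (hvσ : ∀ x, v (σ x) = v x) {b : F × F} (hb0 : herm σ b b ≠ 0) (hb : v (herm σ b b) = 0)
    {Λ : Set (F × F)} (hΛ : IsVertex0 σ v Λ) (hbΛ : b ∈ Λ) :
    Λ = spanL v b (hermPerp σ b) := by
  have hsub := subset_spanL_hermPerp_of_isVertex0 hv hσ hvσ hb0 hb hΛ hbΛ
  refine hsub.antisymm ?_
  calc spanL v b (hermPerp σ b)
      = dualL σ v (spanL v b (hermPerp σ b)) :=
        (isVertex0_spanL_hermPerp hv hσ hvσ hb0 hb).2.symm
    _ ⊆ dualL σ v Λ := dualL_anti hsub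
    _ = Λ := hΛ.2

end Lattice

theorem statement4_general
    (σ : F →+* F) (π : F) (v : F → ℤ)
    (hinv : ∀ x, σ (σ x) = x)
    (hπ : π ≠ 0)
    (hvπ : v π = 1)
    (hvσ : ∀ x, v (σ x) = v x)
    (hvmul : ∀ x y : F, x ≠ 0 → y ≠ 0 → v (x * y) = v x + v y)
    (hvadd : ∀ x y : F, x ≠ 0 → y ≠ 0 → x + y ≠ 0 → min (v x) (v y) ≤ v (x + y))
    (b : F × F) (hb : herm σ b b ≠ 0)
    (α : ℤ) (hα : v (herm σ b b) = 2 * α) :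
    ∃! Λ : Set (F × F), IsVertex0 σ v Λ ∧
      (π ^ (-α)) • b ∈ Λ ∧ (π ^ (-α)) • b ∉ (fun x => π • x) '' Λ := by
  have hv : IsIntValuation v := ⟨hvmul, hvadd⟩
  set b' := (π ^ (-α)) • b
  have hc : π ^ (-α) ≠ 0 := zpow_ne_zero _ hπ
  have hσc : σ (π ^ (-α)) ≠ 0 := (map_ne_zero σ).2 hc
  have hb'0 : herm σ b' b' ≠ 0 := by
    rw [herm_smul_smul]
    exact mul_ne_zero (mul_ne_zero hc hσc) hb
  have hb' : v (herm σ b' b') = 0 := by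
    rw [herm_smul_smul, hv.map_mul _ _ (mul_ne_zero hc hσc) hb, hv.map_mul _ _ hc hσc, hvσ,
      hv.map_zpow hπ, hvπ, hα]
    ring
  have hΛ := isVertex0_spanL_hermPerp hv hinv hvσ hb'0 hb'
  refine ⟨spanL v b' (hermPerp σ b'), ⟨hΛ, mem_spanL_left hv _ _,
    not_mem_smul_of_subset_dualL hv hΛ.2.superset hvπ hb'0 hb' (mem_spanL_left hv _ _)⟩, ?_⟩
  rintro Λ ⟨hΛ', hb'Λ, -⟩
  exact eq_spanL_hermPerp_of_isVertex0 hv hinv hvσ hb'0 hb' hΛ' hb'Λ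

theorem statement4
    (σ : F →+* F) (π : F) (v : F → ℤ)
    (hinv : ∀ x, σ (σ x) = x)
    (hσπ : σ π = -π)
    (hπ : π ≠ 0)
    (h2 : (2 : F) ≠ 0)
    (hvπ : v π = 1)
    (hv2 : v (2 : F) = 0)
    (hvσ : ∀ x, v (σ x) = v x)
    (hvmul : ∀ x y : F, x ≠ 0 → y ≠ 0 → v (x * y) = v x + v y)
    (hvadd : ∀ x y : F, x ≠ 0 → y ≠ 0 → x + y ≠ 0 → min (v x) (v y) ≤ v (x + y))
    (heven : ∀ x : F, σ x = x → x ≠ 0 → Even (v x))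
    (b : F × F) (hb : herm σ b b ≠ 0)
    (α : ℤ) (hα : v (herm σ b b) = 2 * α) :
    ∃! Λ : Set (F × F), IsVertex0 σ v Λ ∧
      (π ^ (-α)) • b ∈ Λ ∧ (π ^ (-α)) • b ∉ (fun x => π • x) '' Λ :=
  statement4_general σ π v hinv hπ hvπ hvσ hvmul hvadd b hb α hα
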